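/- arXiv:0809.2178 — 5 statements merged into one kernel-verified Lean document; each statement's English description precedes it below -/
import Mathlib

section
/- Let A be an n×n upper triangular matrix over Z/2 with zero diagonal entries, and let H = (Z/2)[x_1,...,x_n]/(x_j^2 = x_j·Σ_i A^i_j x_i, j=1,...,n) be the associated graded ring. Then the monomials x_{i_1}···x_{i_q} with 1 ≤ i_1 < ··· < i_q ≤ n form a basis of the degree-q part H^q as a Z/2-vector space; in particular dim_{Z/2} H^q = C(n,q). -/
/-!
Since `A` is strictly upper triangular, the relation `x_j^2 = Σ_{i<j} A^i_j x_i x_j` rewrites a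
monomial with a repeated factor `x_j` into monomials in which one factor `x_j` is replaced by some
`x_i` with `i < j`. This strictly lowers the binary weight `Σ_j m_j 2^j` of the exponent vector `m`,
so every monomial of degree `q` reduces to square-free ones, which therefore span `H^q`.

For independence, reduction (at an arbitrarily chosen repeated variable) defines a normal form of
monomials with values in formal combinations of square-free monomials. Reducing at two different
repeated variables in either order produces the same double sum, so by induction on the weight the
normal form satisfies the reduction identity at every repeated variable. Its linear extension hence
kills the defining ideal, descends to `H`, and sends the square-free monomials to a basis.
-/

open MvPolynomial

/-- Strictly upper triangular matrix (zero diagonal, zero below diagonal);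
membership in `𝔅(n)`. -/
def IsUpperTri {n : ℕ} (A : Matrix (Fin n) (Fin n) (ZMod 2)) : Prop :=
  ∀ i j : Fin n, j ≤ i → A i j = 0

/-- The defining ideal `(x_j^2 - x_j Σ_i A^i_j x_i)`. -/
noncomputable def bottIdeal {n : ℕ} (A : Matrix (Fin n) (Fin n) (ZMod 2)) :
    Ideal (MvPolynomial (Fin n) (ZMod 2)) :=
  Ideal.span (Set.range fun j : Fin n => X j ^ 2 - X j * ∑ i : Fin n, C (A i j) * X i)

/-- The Bott ring `H = (Z/2)[x_1,...,x_n]/(x_j^2 = x_j Σ_i A^i_j x_i)` presented by `A`. -/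
abbrev BottRing {n : ℕ} (A : Matrix (Fin n) (Fin n) (ZMod 2)) : Type :=
  MvPolynomial (Fin n) (ZMod 2) ⧸ bottIdeal A

/-- The canonical degree-one generators `x_j`. -/
noncomputable def bx {n : ℕ} (A : Matrix (Fin n) (Fin n) (ZMod 2)) (j : Fin n) : BottRing A :=
  Ideal.Quotient.mk (bottIdeal A) (X j)

/-- The degree-one part `H^1` of the Bott ring (the span of `x_1,...,x_n`). -/
noncomputable def deg1 {n : ℕ} (A : Matrix (Fin n) (Fin n) (ZMod 2)) :
    Submodule (ZMod 2) (BottRing A) :=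
  Submodule.span (ZMod 2) (Set.range (bx A))

/-- The eigen-elements `α_j = Σ_i A^i_j x_i`. -/
noncomputable def alphaEl {n : ℕ} (A : Matrix (Fin n) (Fin n) (ZMod 2)) (j : Fin n) :
    BottRing A :=
  ∑ i : Fin n, A i j • bx A i

/-- The degree-`q` part of the Bott ring: the image of homogeneous polynomials of degree `q`. -/
noncomputable def degq {n : ℕ} (A : Matrix (Fin n) (Fin n) (ZMod 2)) (q : ℕ) :
    Submodule (ZMod 2) (BottRing A) :=
  Submodule.span (ZMod 2)
    ((Ideal.Quotient.mk (bottIdeal A)) ''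
      {p : MvPolynomial (Fin n) (ZMod 2) | p.IsHomogeneous q})

namespace MvPolynomial

variable {σ R : Type*} [CommSemiring R]

lemma monomial_eq_prod_X_of_le_one {m : σ →₀ ℕ} (hm : ∀ i, m i ≤ 1) :
    monomial m (1 : R) = ∏ i ∈ m.support, X i := by
  rw [← prod_X_pow_eq_monomial]
  refine Finset.prod_congr rfl fun i hi => ?_
  rw [show m i = 1 by have := Finsupp.mem_support_iff.mp hi; have := hm i; omega, pow_one]

lemma homogeneousSubmodule_eq_span_monomial (q : ℕ) :
    homogeneousSubmodule σ R q = Submodule.span R ((monomial · 1) '' {d | d.degree = q}) := by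
  rw [homogeneousSubmodule_eq_finsupp_supported, ← restrictSupport_eq_span]
  rfl

lemma monomial_mul_X_sq_sub {S : Type*} [CommRing S] [Fintype σ] (m : σ →₀ ℕ) (j : σ)
    (a : σ → S) :
    monomial m 1 * (X j ^ 2 - X j * ∑ i, C (a i) * X i) =
      monomial (m + Finsupp.single j 2) (1 : S) -
        ∑ i, monomial (m + Finsupp.single j 1 + Finsupp.single i 1) (a i) := by
  rw [X_pow_eq_monomial]
  simp only [mul_sub, Finset.mul_sum, X, C_mul_monomial, monomial_mul, mul_one, one_mul,
    add_assoc]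

end MvPolynomial

namespace Finsupp

variable {σ : Type*}

lemma card_support_eq_degree {m : σ →₀ ℕ} (hm : ∀ i, m i ≤ 1) : m.support.card = m.degree := by
  rw [degree_apply, Finset.card_eq_sum_ones]
  refine Finset.sum_congr rfl fun i hi => ?_
  have := mem_support_iff.mp hi
  have := hm i
  omega

lemma exists_eq_add_single_of_add_single_eq [DecidableEq σ] {a b : σ →₀ ℕ} {j k : σ} {r : ℕ}
    (hkj : k ≠ j) (h : a + single j r = b + single k r) :
    ∃ c, a = c + single k r ∧ b = c + single j r := by
  have hk : single k r ≤ a := by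
    have := DFunLike.congr_fun h k
    simp only [coe_add, Pi.add_apply, single_eq_same, single_eq_of_ne hkj] at this
    exact single_le_iff.mpr (by omega)
  refine ⟨a - single k r, (tsub_add_cancel_of_le hk).symm, add_left_injective (single k r) ?_⟩
  change b + single k r = a - single k r + single j r + single k r
  rw [← h, add_right_comm, tsub_add_cancel_of_le hk]

end Finsupp

lemma Multiset.toFinsupp_val_le_one {σ : Type*} [DecidableEq σ] (s : Finset σ) (i : σ) :
    Multiset.toFinsupp s.val i ≤ 1 :=
  Multiset.nodup_iff_count_le_one.mp s.nodup i

namespace BottRing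

open Finsupp Finset

variable {n : ℕ}

noncomputable def binaryWeight : (Fin n →₀ ℕ) →+ ℕ := weight fun i : Fin n => 2 ^ (i : ℕ)

lemma binaryWeight_single (j : Fin n) (a : ℕ) : binaryWeight (single j a) = a * 2 ^ (j : ℕ) := by
  rw [binaryWeight, weight_single, smul_eq_mul]

lemma binaryWeight_reduce_lt {i j : Fin n} (hij : i < j) (m : Fin n →₀ ℕ) :
    binaryWeight (m + single j 1 + single i 1) < binaryWeight (m + single j 2) := by
  have : 2 ^ (i : ℕ) < 2 ^ (j : ℕ) := Nat.pow_lt_pow_right one_lt_two hij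
  simp only [map_add, binaryWeight_single]
  omega

/-- Values are combinations of square-free monomials, each recorded by its support. -/
noncomputable def normalForm (A : Matrix (Fin n) (Fin n) (ZMod 2)) (m : Fin n →₀ ℕ) :
    Finset (Fin n) →₀ ZMod 2 :=
  if h : ∃ j, 2 ≤ m j then
    ∑ i ∈ (Iio h.choose).attach, A i h.choose •
      normalForm A (m - single h.choose 2 + single h.choose 1 + single i.1 1)
  else single m.support 1
termination_by binaryWeight m
decreasing_by
  conv_rhs => rw [← tsub_add_cancel_of_le (single_le_iff.mpr h.choose_spec)]
  exact binaryWeight_reduce_lt (mem_Iio.mp i.2) _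

variable (A : Matrix (Fin n) (Fin n) (ZMod 2))

lemma normalForm_of_le_one {m : Fin n →₀ ℕ} (hm : ∀ j, m j ≤ 1) :
    normalForm A m = single m.support 1 := by
  rw [normalForm, dif_neg]
  rintro ⟨j, hj⟩
  exact absurd (hm j) (by omega)

lemma exists_normalForm_eq_of_two_le {m : Fin n →₀ ℕ} (h : ∃ j, 2 ≤ m j) :
    ∃ k m', m = m' + single k 2 ∧ normalForm A m =
      ∑ i ∈ Iio k, A i k • normalForm A (m' + single k 1 + single i 1) := by
  refine ⟨h.choose, m - single h.choose 2,
    (tsub_add_cancel_of_le (single_le_iff.mpr h.choose_spec)).symm, ?_⟩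
  rw [normalForm, dif_pos h]
  exact sum_attach (Iio h.choose) fun i => A i h.choose •
    normalForm A (m - single h.choose 2 + single h.choose 1 + single i 1)

lemma normalForm_add_single_two (m : Fin n →₀ ℕ) (j : Fin n) :
    normalForm A (m + single j 2) =
      ∑ i ∈ Iio j, A i j • normalForm A (m + single j 1 + single i 1) := by
  induction hw : binaryWeight (m + single j 2) using Nat.strong_induction_on
    generalizing m j with
  | _ w ih =>
  obtain ⟨k, m', hm', hk⟩ := exists_normalForm_eq_of_two_le A (m := m + single j 2)
    ⟨j, by simp only [Finsupp.coe_add, Pi.add_apply, single_eq_same]; omega⟩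
  rw [hk]
  by_cases hkj : k = j
  · subst hkj
    rw [add_left_injective _ hm'.symm]
  obtain ⟨c, rfl, rfl⟩ := exists_eq_add_single_of_add_single_eq hkj hm'
  -- Reducing at `l` and then at `l'` gives a double sum that is symmetric in `l, l'`.
  have expand (l l' : Fin n) (hl : binaryWeight (c + single l' 2 + single l 2) = w) :
      ∑ i ∈ Iio l, A i l • normalForm A (c + single l' 2 + single l 1 + single i 1) =
        ∑ i ∈ Iio l, ∑ i' ∈ Iio l', A i l • A i' l' •
          normalForm A (c + single l 1 + single i 1 + single l' 1 + single i' 1) := by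
    refine sum_congr rfl fun i hi => ?_
    have e : c + single l' 2 + single l 1 + single i 1 =
        c + single l 1 + single i 1 + single l' 2 := by
      abel
    have hlt : binaryWeight (c + single l 1 + single i 1 + single l' 2) < w := by
      rw [← hl, ← e]
      exact binaryWeight_reduce_lt (mem_Iio.mp hi) _
    rw [e, ih _ hlt _ _ rfl, Finset.smul_sum]
  rw [expand k j (by rw [← hw, add_right_comm]), expand j k hw, Finset.sum_comm]
  refine sum_congr rfl fun i' _ => sum_congr rfl fun i _ => ?_
  rw [smul_comm]
  congr 3
  abel

noncomputable def normalFormLinear :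
    MvPolynomial (Fin n) (ZMod 2) →ₗ[ZMod 2] Finset (Fin n) →₀ ZMod 2 :=
  (basisMonomials (Fin n) (ZMod 2)).constr (ZMod 2) (normalForm A)

lemma normalFormLinear_monomial (m : Fin n →₀ ℕ) (c : ZMod 2) :
    normalFormLinear A (monomial m c) = c • normalForm A m := by
  have : monomial m c = c • basisMonomials (Fin n) (ZMod 2) m := by
    rw [coe_basisMonomials, smul_monomial, smul_eq_mul, mul_one]
  rw [this, map_smul, normalFormLinear, Module.Basis.constr_basis]

variable {A}

lemma sum_Iio_smul_eq_sum (hA : IsUpperTri A) {M : Type*} [AddCommMonoid M] [Module (ZMod 2) M]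
    (j : Fin n) (f : Fin n → M) : ∑ i ∈ Iio j, A i j • f i = ∑ i, A i j • f i :=
  Finset.sum_subset (subset_univ _) fun i _ hi =>
    by rw [hA i j (not_lt.mp (mem_Iio.not.mp hi)), zero_smul]

lemma normalFormLinear_mul_rel (hA : IsUpperTri A) (p : MvPolynomial (Fin n) (ZMod 2))
    (j : Fin n) : normalFormLinear A (p * (X j ^ 2 - X j * ∑ i, C (A i j) * X i)) = 0 := by
  suffices (normalFormLinear A).comp
      (LinearMap.mulRight (ZMod 2) (X j ^ 2 - X j * ∑ i, C (A i j) * X i)) = 0 from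
    LinearMap.congr_fun this p
  refine (basisMonomials (Fin n) (ZMod 2)).ext fun m => ?_
  simp only [coe_basisMonomials, LinearMap.comp_apply, LinearMap.mulRight_apply,
    monomial_mul_X_sq_sub, map_sub, map_sum, normalFormLinear_monomial, one_smul,
    normalForm_add_single_two, LinearMap.zero_apply, sub_eq_zero]
  exact sum_Iio_smul_eq_sum hA j _

lemma normalFormLinear_eq_zero_of_mem (hA : IsUpperTri A) {p : MvPolynomial (Fin n) (ZMod 2)}
    (hp : p ∈ bottIdeal A) : normalFormLinear A p = 0 := by
  obtain ⟨c, rfl⟩ := Ideal.mem_span_range_iff_exists_fun.mp hp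
  simp only [map_sum, normalFormLinear_mul_rel hA, sum_const_zero]

lemma exists_linearMap_comp_mk (hA : IsUpperTri A) :
    ∃ ψ : BottRing A →ₗ[ZMod 2] Finset (Fin n) →₀ ZMod 2,
      ∀ p, ψ (Ideal.Quotient.mk (bottIdeal A) p) = normalFormLinear A p :=
  ⟨((bottIdeal A).restrictScalars (ZMod 2)).liftQ (normalFormLinear A)
      (fun _ hp => normalFormLinear_eq_zero_of_mem hA hp) ∘ₗ
    (Submodule.Quotient.restrictScalarsEquiv (ZMod 2) (bottIdeal A)).symm.toLinearMap,
    fun _ => rfl⟩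

lemma prod_bx_eq_mk_monomial (s : Finset (Fin n)) :
    ∏ i ∈ s, bx A i =
      Ideal.Quotient.mk (bottIdeal A) (monomial (Multiset.toFinsupp s.val) 1) := by
  rw [monomial_eq_prod_X_of_le_one (Multiset.toFinsupp_val_le_one s),
    Multiset.toFinsupp_support, Finset.val_toFinset, map_prod]
  rfl

theorem linearIndependent_prod_bx (hA : IsUpperTri A) :
    LinearIndependent (ZMod 2) fun s : Finset (Fin n) => ∏ i ∈ s, bx A i := by
  obtain ⟨ψ, hψ⟩ := exists_linearMap_comp_mk hA
  refine LinearIndependent.of_comp ψ ?_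
  convert (Finsupp.basisSingleOne : Module.Basis _ (ZMod 2) _).linearIndependent
  ext1 s
  rw [Function.comp_apply, prod_bx_eq_mk_monomial, hψ, normalFormLinear_monomial, one_smul,
    normalForm_of_le_one _ (Multiset.toFinsupp_val_le_one s), Multiset.toFinsupp_support,
    Finset.val_toFinset, Finsupp.coe_basisSingleOne]

lemma mk_monomial_add_single_two (hA : IsUpperTri A) (m : Fin n →₀ ℕ) (j : Fin n) :
    Ideal.Quotient.mk (bottIdeal A) (monomial (m + single j 2) 1) =
      ∑ i ∈ Iio j, A i j •
        Ideal.Quotient.mk (bottIdeal A) (monomial (m + single j 1 + single i 1) 1) := by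
  have hrel : Ideal.Quotient.mk (bottIdeal A)
      (monomial m 1 * (X j ^ 2 - X j * ∑ i, C (A i j) * X i)) = 0 :=
    Ideal.Quotient.eq_zero_iff_mem.mpr (Ideal.mul_mem_left _ _ (Ideal.subset_span ⟨j, rfl⟩))
  rw [monomial_mul_X_sq_sub, map_sub, sub_eq_zero] at hrel
  rw [hrel, sum_Iio_smul_eq_sum hA, map_sum]
  refine Finset.sum_congr rfl fun i _ => ?_
  rw [← Ideal.Quotient.mkₐ_eq_mk (ZMod 2), ← map_smul, smul_monomial, smul_eq_mul, mul_one]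

lemma mk_monomial_mem_span_prod_bx (hA : IsUpperTri A) {q : ℕ} (m : Fin n →₀ ℕ)
    (hm : m.degree = q) :
    Ideal.Quotient.mk (bottIdeal A) (monomial m 1) ∈ Submodule.span (ZMod 2)
      (Set.range fun s : {s : Finset (Fin n) // s.card = q} => ∏ i ∈ s.1, bx A i) := by
  induction hw : binaryWeight m using Nat.strong_induction_on generalizing m with
  | _ w ih =>
  by_cases h : ∃ j, 2 ≤ m j
  · obtain ⟨j, hj⟩ := h
    obtain ⟨m, rfl⟩ : ∃ m', m = m' + single j 2 :=
      ⟨_, (tsub_add_cancel_of_le (single_le_iff.mpr hj)).symm⟩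
    rw [mk_monomial_add_single_two hA]
    refine Submodule.sum_mem _ fun i hi => Submodule.smul_mem _ _ (ih _ ?_ _ ?_ rfl)
    · exact hw ▸ binaryWeight_reduce_lt (mem_Iio.mp hi) m
    · simpa [map_add] using hm
  · push Not at h
    have hm1 : ∀ j, m j ≤ 1 := fun j => Nat.le_of_lt_succ (h j)
    refine Submodule.subset_span ⟨⟨m.support, (card_support_eq_degree hm1).trans hm⟩, ?_⟩
    rw [monomial_eq_prod_X_of_le_one hm1, map_prod]
    rfl

lemma degq_eq_span_mk_monomial (q : ℕ) :
    degq A q = Submodule.span (ZMod 2)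
      ((fun d => Ideal.Quotient.mk (bottIdeal A) (monomial d 1)) '' {d | d.degree = q}) := by
  have h : degq A q = (homogeneousSubmodule (Fin n) (ZMod 2) q).map
      (Ideal.Quotient.mkₐ (ZMod 2) (bottIdeal A)).toLinearMap := by
    rw [degq, ← Submodule.span_eq (homogeneousSubmodule (Fin n) (ZMod 2) q), Submodule.map_span]
    rfl
  rw [h, homogeneousSubmodule_eq_span_monomial, Submodule.map_span, ← Set.image_comp]
  rfl

theorem span_prod_bx_eq_degq (hA : IsUpperTri A) (q : ℕ) :
    Submodule.span (ZMod 2)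
      (Set.range fun s : {s : Finset (Fin n) // s.card = q} => ∏ i ∈ s.1, bx A i) = degq A q := by
  rw [degq_eq_span_mk_monomial]
  refine le_antisymm (Submodule.span_le.mpr ?_) (Submodule.span_le.mpr ?_)
  · rintro _ ⟨s, rfl⟩
    refine Submodule.subset_span ⟨_, ?_, (prod_bx_eq_mk_monomial s.1).symm⟩
    rw [Set.mem_ofPred_eq, ← card_support_eq_degree (Multiset.toFinsupp_val_le_one s.1),
      Multiset.toFinsupp_support, Finset.val_toFinset, s.2]
  · rintro _ ⟨m, hm, rfl⟩
    exact mk_monomial_mem_span_prod_bx hA m hm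

end BottRing

/-- The square-free monomials `x_{i_1} ⋯ x_{i_q}` (indexed by `q`-element subsets of
`{1,…,n}`) form a basis of the degree-`q` part `H^q` of the Bott ring of a strictly
upper triangular matrix `A`; in particular `dim H^q = C(n,q)`. -/
theorem stmt0 {n : ℕ} (A : Matrix (Fin n) (Fin n) (ZMod 2)) (hA : IsUpperTri A) (q : ℕ) :
    LinearIndependent (ZMod 2)
      (fun s : {s : Finset (Fin n) // s.card = q} => ∏ i ∈ s.1, bx A i) ∧
    Submodule.span (ZMod 2)
      (Set.range (fun s : {s : Finset (Fin n) // s.card = q} => ∏ i ∈ s.1, bx A i))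
      = degq A q ∧
    Module.finrank (ZMod 2) (degq A q) = n.choose q := by
  have hli : LinearIndependent (ZMod 2)
      fun s : {s : Finset (Fin n) // s.card = q} => ∏ i ∈ s.1, bx A i :=
    (BottRing.linearIndependent_prod_bx hA).comp _ Subtype.val_injective
  refine ⟨hli, BottRing.span_prod_bx_eq_degq hA q, ?_⟩
  rw [← BottRing.span_prod_bx_eq_degq hA q, finrank_span_eq_card hli, Fintype.card_finset_len,
    Fintype.card_fin]
end

section
/- Let A ∈ 𝔅(n) and H = (Z/2)[x_1,...,x_n]/(x_j^2 = x_j α_j) where α_j = Σ_{i=1}^n A^i_j x_i. If α ∈ H^1 is an eigen-element of H (i.e., there exists x ∈ H^1 with x^2 = αx, x ≠ 0 and x ≠ α), then α = α_j for some j ∈ {1,...,n}. -/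
open MvPolynomial

/-!
For `i < j` the functional `p ↦ [x_i x_j] p + A i j • [x_j²] p` on `(ℤ/2)[x_1, …, x_n]` vanishes
on each defining relation `x_k² - x_k α_k`, and, since these relations are homogeneous quadratic,
on the whole ideal they generate. Applied to `x² - α x` with `x = ∑ c_t x_t`, `α = ∑ a_t x_t` it
gives `a_i c_j + a_j c_i = A i j c_j (c_j + a_j)` for all `i < j`. If `j` is the largest index
with `c_j = 1`, these relations force `a = c` when `a_j = 1`, i.e. `α = x`, and `a = A · j`,
i.e. `α = α_j`, when `a_j = 0`.
-/

namespace MvPolynomial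

variable {σ R : Type*} [CommSemiring R]

theorem IsHomogeneous.coeff_mul_of_degree_eq {r g : MvPolynomial σ R} {d : ℕ}
    (hg : g.IsHomogeneous d) {m : σ →₀ ℕ} (hm : m.degree = d) :
    coeff m (r * g) = coeff 0 r * coeff m g := by
  classical
  rw [coeff_mul]
  refine Finset.sum_eq_single (0, m) (fun ⟨u, v⟩ huv hne => ?_) (by simp)
  rw [Finset.HasAntidiagonal.mem_antidiagonal] at huv
  dsimp only at huv ⊢
  by_cases hv : coeff v g = 0
  · rw [hv, mul_zero]
  have hu : u = 0 := by
    rw [← Finsupp.degree_eq_zero_iff]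
    have hdv : v.degree = d := by rw [Finsupp.degree_eq_weight_one]; exact hg hv
    have := congrArg Finsupp.degree huv
    rw [map_add, hm, hdv] at this
    omega
  subst hu
  rw [zero_add] at huv
  exact absurd (huv ▸ rfl) hne

variable [Fintype σ]

noncomputable def linearForm (c : σ → R) : MvPolynomial σ R :=
  ∑ t, C (c t) * X t

theorem coeff_linearForm_mul_linearForm [DecidableEq σ] (c a : σ → R) (m : σ →₀ ℕ) :
    coeff m (linearForm c * linearForm a) =
      ∑ t, ∑ s, if Finsupp.single t 1 + Finsupp.single s 1 = m then c t * a s else 0 := by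
  simp_rw [linearForm, Finset.sum_mul_sum, coeff_sum]
  refine Finset.sum_congr rfl fun t _ => Finset.sum_congr rfl fun s _ => ?_
  rw [show C (c t) * X t * (C (a s) * X s)
      = monomial (Finsupp.single t 1 + Finsupp.single s 1) (c t * a s) by
    simp only [X, C_mul_monomial, monomial_mul]; ring_nf]
  rw [coeff_monomial]

theorem coeff_linearForm_mul_linearForm_of_ne (c a : σ → R) {i j : σ} (hij : i ≠ j) :
    coeff (Finsupp.single i 1 + Finsupp.single j 1)
      (linearForm c * linearForm a) = c i * a j + c j * a i := by
  classical
  rw [coeff_linearForm_mul_linearForm]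
  simp_rw [Finsupp.single_add_single_eq_single_add_single one_ne_zero one_ne_zero]
  have split : ∀ t s, (if (t = i ∧ s = j) ∨ (t = j ∧ s = i) then c t * a s else 0) =
      (if t = i ∧ s = j then c t * a s else 0) + (if t = j ∧ s = i then c t * a s else 0) := by
    intro t s
    by_cases h : t = i <;> by_cases h' : t = j <;> simp_all [eq_comm]
  simp [hij, split, Finset.sum_add_distrib, ite_and]

theorem coeff_linearForm_mul_linearForm_sq (c a : σ → R) (j : σ) :
    coeff (Finsupp.single j 2)
      (linearForm c * linearForm a) = c j * a j := by
  classical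
  rw [coeff_linearForm_mul_linearForm, ← one_add_one_eq_two, Finsupp.single_add]
  simp_rw [Finsupp.single_add_single_eq_single_add_single one_ne_zero one_ne_zero]
  simp [ite_and]

end MvPolynomial

section BottFunctional

variable {σ R : Type*} [CommRing R] (A : Matrix σ σ R)

noncomputable def bottFunctional (i j : σ) : MvPolynomial σ R →ₗ[R] R :=
  lcoeff R (Finsupp.single i 1 + Finsupp.single j 1) + A i j • lcoeff R (Finsupp.single j 2)

theorem bottFunctional_linearForm_mul_linearForm [Fintype σ] {i j : σ} (hij : i ≠ j)
    (c a : σ → R) :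
    bottFunctional A i j (linearForm c * linearForm a) =
      c i * a j + c j * a i + A i j * (c j * a j) := by
  simp [bottFunctional, coeff_linearForm_mul_linearForm_of_ne _ _ hij,
    coeff_linearForm_mul_linearForm_sq]

theorem bottFunctional_mul_of_isHomogeneous (i j : σ) (r : MvPolynomial σ R)
    {g : MvPolynomial σ R} (hg : g.IsHomogeneous 2) :
    bottFunctional A i j (r * g) = coeff 0 r * bottFunctional A i j g := by
  have hpair : (Finsupp.single i 1 + Finsupp.single j 1).degree = 2 := by
    simp [map_add, Finsupp.degree_single]
  simp only [bottFunctional, LinearMap.add_apply, LinearMap.smul_apply, lcoeff_apply,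
    hg.coeff_mul_of_degree_eq hpair, hg.coeff_mul_of_degree_eq (Finsupp.degree_single j 2),
    smul_eq_mul]
  ring

variable [Fintype σ]

noncomputable def bottGenerator (k : σ) : MvPolynomial σ R :=
  X k ^ 2 - X k * linearForm fun l => A l k

theorem isHomogeneous_bottGenerator (k : σ) : (bottGenerator A k).IsHomogeneous 2 :=
  (isHomogeneous_X_pow k 2).sub <|
    (isHomogeneous_X R k).mul (IsHomogeneous.sum _ _ _ fun _ _ => isHomogeneous_C_mul_X _ _)

theorem bottFunctional_bottGenerator {i j : σ} (hij : i ≠ j) (hji : A j i = 0) (hjj : A j j = 0)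
    (k : σ) : bottFunctional A i j (bottGenerator A k) = 0 := by
  classical
  have hX : (X k : MvPolynomial σ R) = linearForm (Pi.single k 1) := by
    simp [linearForm, Pi.single_apply]
  rw [bottGenerator, sq, map_sub, hX, bottFunctional_linearForm_mul_linearForm A hij,
    bottFunctional_linearForm_mul_linearForm A hij]
  by_cases hkj : k = j
  · subst hkj
    simp [hij, hjj]
  · by_cases hki : k = i
    · subst hki
      simp [hkj, hji]
    · simp [Ne.symm hkj, Ne.symm hki]

theorem bottFunctional_eq_zero_of_mem {i j : σ} (hij : i ≠ j) (hji : A j i = 0) (hjj : A j j = 0)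
    {p : MvPolynomial σ R}
    (hp : p ∈ Ideal.span (Set.range (bottGenerator A))) :
    bottFunctional A i j p = 0 := by
  obtain ⟨r, rfl⟩ := Ideal.mem_span_range_iff_exists_fun.mp hp
  simp [bottFunctional_mul_of_isHomogeneous A i j _ (isHomogeneous_bottGenerator A _),
    bottFunctional_bottGenerator A hij hji hjj]

end BottFunctional

theorem eq_or_eq_col_of_bottRelations {n : ℕ} {A : Matrix (Fin n) (Fin n) (ZMod 2)}
    (hA : IsUpperTri A) {c a : Fin n → ZMod 2} (hc : c ≠ 0)
    (h : ∀ i j, i < j → a i * c j + a j * c i = A i j * c j * (c j + a j)) :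
    a = c ∨ ∃ j, a = fun i => A i j := by
  have eq_one_of_ne_zero : ∀ r : ZMod 2, r ≠ 0 → r = 1 := by decide
  obtain ⟨j, hj, hjmax⟩ := Finset.exists_max_image (Finset.univ.filter (c · ≠ 0)) id
    (Function.ne_iff.mp hc |>.imp fun k hk => by simpa using hk)
  have hcj : c j = 1 := eq_one_of_ne_zero _ (by simpa using hj)
  have hc_gt : ∀ k, j < k → c k = 0 := fun k hjk => by
    by_contra hk
    exact (hjmax k (by simpa using hk)).not_gt hjk
  have ha_gt : ∀ k, j < k → a k = 0 := fun k hjk => by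
    simpa [hcj, hc_gt k hjk] using h j k hjk
  rcases eq_or_ne (a j) 0 with haj | haj
  · refine Or.inr ⟨j, funext fun t => ?_⟩
    rcases lt_trichotomy t j with htj | rfl | hjt
    · simpa [hcj, haj] using h t j htj
    · rw [haj, hA t t le_rfl]
    · rw [ha_gt t hjt, hA t j hjt.le]
  · replace haj := eq_one_of_ne_zero _ haj
    refine Or.inl (funext fun t => ?_)
    rcases lt_trichotomy t j with htj | rfl | hjt
    · have := h t j htj
      rw [hcj, haj, show (1 + 1 : ZMod 2) = 0 from rfl, mul_one, one_mul, mul_zero] at this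
      exact CharTwo.add_eq_zero.mp this
    · rw [haj, hcj]
    · rw [ha_gt t hjt, hc_gt t hjt]

section BottRing

variable {n : ℕ} (A : Matrix (Fin n) (Fin n) (ZMod 2))

theorem mk_linearForm (c : Fin n → ZMod 2) :
    Ideal.Quotient.mk (bottIdeal A) (linearForm c) = ∑ t, c t • bx A t := by
  simp_rw [linearForm, C_mul', bx, ← Ideal.Quotient.mkₐ_eq_mk (ZMod 2), map_sum, map_smul]

theorem exists_mk_linearForm_of_mem_deg1 {x : BottRing A} (hx : x ∈ deg1 A) :
    ∃ c : Fin n → ZMod 2, Ideal.Quotient.mk (bottIdeal A) (linearForm c) = x := by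
  obtain ⟨c, rfl⟩ := (Submodule.mem_span_range_iff_exists_fun _).mp hx
  exact ⟨c, mk_linearForm A c⟩

theorem bottRelations_of_sq_eq_mul (hA : IsUpperTri A) {c a : Fin n → ZMod 2}
    (h : Ideal.Quotient.mk (bottIdeal A) (linearForm c) ^ 2 =
      Ideal.Quotient.mk (bottIdeal A) (linearForm a) *
        Ideal.Quotient.mk (bottIdeal A) (linearForm c))
    (i j : Fin n) (hij : i < j) :
    a i * c j + a j * c i = A i j * c j * (c j + a j) := by
  rw [sq, ← map_mul, ← map_mul, Ideal.Quotient.eq] at h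
  have h0 := bottFunctional_eq_zero_of_mem A hij.ne (hA j i hij.le) (hA j j le_rfl) h
  rw [map_sub, bottFunctional_linearForm_mul_linearForm A hij.ne,
    bottFunctional_linearForm_mul_linearForm A hij.ne] at h0
  linear_combination (norm := ring_nf) h0
  reduce_mod_char

end BottRing

/-- If `α ∈ H^1` is an eigen-element of the Bott ring (there is `x ∈ H^1` with
`x² = αx`, `x ≠ 0`, `x ≠ α`), then `α = α_j` for some `j`. -/
theorem stmt5 {n : ℕ} (A : Matrix (Fin n) (Fin n) (ZMod 2)) (hA : IsUpperTri A)
    (α : BottRing A) (hα : α ∈ deg1 A)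
    (h : ∃ x ∈ deg1 A, x ^ 2 = α * x ∧ x ≠ 0 ∧ x ≠ α) :
    ∃ j : Fin n, α = alphaEl A j := by
  obtain ⟨x, hx, hsq, hx0, hxα⟩ := h
  obtain ⟨c, rfl⟩ := exists_mk_linearForm_of_mem_deg1 A hx
  obtain ⟨a, rfl⟩ := exists_mk_linearForm_of_mem_deg1 A hα
  have hc : c ≠ 0 := by
    rintro rfl
    simp [linearForm] at hx0
  rcases eq_or_eq_col_of_bottRelations hA hc (bottRelations_of_sq_eq_mul A hA hsq) with
    rfl | ⟨j, rfl⟩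
  · exact absurd rfl hxα
  · exact ⟨j, mk_linearForm A _⟩
end

section
/- Let H be a Bott ring presented by a nonzero matrix A ∈ 𝔅(n). Then a Klein pair exists in H; that is, there exist x, x̄ ∈ H^1, both nonzero, with x ≠ x̄, x·x̄ = 0, and (x + x̄)^2 = 0. -/
/-!
Let `j` be the first nonzero column of `A` and take `x = x_j`, `x̄ = x_j + α_j`. In
characteristic 2, `x x̄ = x_j² + x_j α_j = 0` and `x + x̄ = α_j`, whose square is `Σ_i A^i_j x_i²`;
only `i < j` contribute, and those columns vanish, so `x_i² = x_i α_i = 0`. Non-vanishing comes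
from the linear independence of the generators, detected by sending `x_i` to the `i`-th basis
vector of the square-zero extension `ZMod 2 ⊕ (ZMod 2)ⁿ`: `α_j ≠ 0` since column `j` is nonzero,
and `x̄ ≠ 0` since `α_j` lies in the span of the `x_i` with `i < j`.
-/

open MvPolynomial

section BottLift

variable {n : ℕ} (A : Matrix (Fin n) (Fin n) (ZMod 2))
variable {R : Type*} [CommRing R] [Algebra (ZMod 2) R]

theorem bottIdeal_le_ker_aeval (f : Fin n → R) (hf : ∀ i j, f i * f j = 0) :
    bottIdeal A ≤ RingHom.ker (aeval f) := by
  rw [bottIdeal, Ideal.span_le]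
  rintro _ ⟨j, rfl⟩
  simp only [SetLike.mem_coe, RingHom.mem_ker, map_sub, map_mul, map_sum, aeval_X, aeval_C,
    Finset.mul_sum, sq, hf, mul_left_comm (f j), mul_zero, Finset.sum_const_zero, sub_zero]

noncomputable def bottLift (f : Fin n → R) (hf : ∀ i j, f i * f j = 0) :
    BottRing A →ₐ[ZMod 2] R :=
  Ideal.Quotient.liftₐ (bottIdeal A) (aeval f) (bottIdeal_le_ker_aeval A f hf)

@[simp]
theorem bottLift_bx (f : Fin n → R) (hf : ∀ i j, f i * f j = 0) (i : Fin n) :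
    bottLift A f hf (bx A i) = f i :=
  aeval_X f i

end BottLift

section BottRing

variable {n : ℕ} (A : Matrix (Fin n) (Fin n) (ZMod 2))

noncomputable def bottToTrivSqZeroExt :
    BottRing A →ₐ[ZMod 2] TrivSqZeroExt (ZMod 2) (Fin n → ZMod 2) :=
  bottLift A (fun i => TrivSqZeroExt.inr (Pi.single i 1)) fun _ _ =>
    TrivSqZeroExt.inr_mul_inr _ _ _

theorem bottToTrivSqZeroExt_sum_smul_bx (g : Fin n → ZMod 2) :
    bottToTrivSqZeroExt A (∑ i, g i • bx A i) = TrivSqZeroExt.inr g := by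
  simp [bottToTrivSqZeroExt, map_sum, ← TrivSqZeroExt.inr_smul, ← TrivSqZeroExt.inr_sum,
    ← pi_eq_sum_univ']

theorem linearIndependent_bx : LinearIndependent (ZMod 2) (bx A) := by
  rw [Fintype.linearIndependent_iff]
  intro g hg
  have h := bottToTrivSqZeroExt_sum_smul_bx A g
  rw [hg, map_zero, ← TrivSqZeroExt.inr_zero] at h
  exact congrFun (TrivSqZeroExt.inr_injective h).symm

instance : Nontrivial (BottRing A) :=
  (bottToTrivSqZeroExt A).toRingHom.domain_nontrivial

instance : CharP (BottRing A) 2 :=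
  charP_of_injective_algebraMap (algebraMap (ZMod 2) (BottRing A)).injective 2

theorem bx_mem_deg1 (j : Fin n) : bx A j ∈ deg1 A :=
  Submodule.subset_span ⟨j, rfl⟩

theorem alphaEl_mem_deg1 (j : Fin n) : alphaEl A j ∈ deg1 A :=
  Submodule.sum_mem _ fun i _ => Submodule.smul_mem _ _ (bx_mem_deg1 A i)

theorem bx_sq (j : Fin n) : bx A j ^ 2 = bx A j * alphaEl A j := by
  have h : Ideal.Quotient.mkₐ (ZMod 2) (bottIdeal A) (X j ^ 2 - X j * ∑ i, A i j • X i) = 0 := by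
    simp_rw [smul_eq_C_mul]
    exact Ideal.Quotient.eq_zero_iff_mem.mpr (Ideal.subset_span ⟨j, rfl⟩)
  simp only [map_sub, map_pow, map_mul, map_sum, map_smul, sub_eq_zero] at h
  exact h

theorem alphaEl_eq_zero_iff (j : Fin n) : alphaEl A j = 0 ↔ ∀ i, A i j = 0 :=
  ⟨Fintype.linearIndependent_iff.mp (linearIndependent_bx A) (A · j),
    fun h => by simp [alphaEl, h]⟩

theorem bx_sq_eq_zero_of_col_eq_zero {j : Fin n} (hj : ∀ i, A i j = 0) : bx A j ^ 2 = 0 := by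
  rw [bx_sq, (alphaEl_eq_zero_iff A j).2 hj, mul_zero]

theorem alphaEl_sq_eq_zero {j : Fin n} (hA : IsUpperTri A) (hj : ∀ j' < j, ∀ i, A i j' = 0) :
    alphaEl A j ^ 2 = 0 := by
  rw [alphaEl, CharTwo.sum_sq]
  refine Finset.sum_eq_zero fun i _ => ?_
  rcases lt_or_ge i j with hij | hji
  · rw [smul_pow, bx_sq_eq_zero_of_col_eq_zero A (hj i hij), smul_zero]
  · rw [hA i j hji, zero_smul, zero_pow two_ne_zero]

theorem alphaEl_mem_span_bx_Iio (hA : IsUpperTri A) (j : Fin n) :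
    alphaEl A j ∈ Submodule.span (ZMod 2) (bx A '' Set.Iio j) := by
  refine Submodule.sum_mem _ fun i _ => ?_
  rcases lt_or_ge i j with hij | hji
  · exact Submodule.smul_mem _ _ (Submodule.subset_span ⟨i, hij, rfl⟩)
  · rw [hA i j hji, zero_smul]
    exact zero_mem _

theorem bx_ne_alphaEl (hA : IsUpperTri A) (j : Fin n) : bx A j ≠ alphaEl A j := fun h =>
  (linearIndependent_bx A).notMem_span_image (lt_irrefl j) (h ▸ alphaEl_mem_span_bx_Iio A hA j)

end BottRing

theorem Matrix.exists_ne_zero_col_forall_lt_col_eq_zero {m n α : Type*} [Zero α] [LinearOrder n]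
    [WellFoundedLT n] {A : Matrix m n α} (hA : A ≠ 0) :
    ∃ j, (∃ i, A i j ≠ 0) ∧ ∀ j' < j, ∀ i, A i j' = 0 := by
  obtain ⟨i, j, hij⟩ : ∃ i j, A i j ≠ 0 := by
    by_contra! h
    exact hA (Matrix.ext h)
  obtain ⟨j₀, hj₀, hmin⟩ := wellFounded_lt.has_min {j | ∃ i, A i j ≠ 0} ⟨j, i, hij⟩
  exact ⟨j₀, hj₀, fun j' hj' i => by_contra fun h => hmin j' ⟨i, h⟩ hj'⟩

/-- If `A ∈ 𝔅(n)` is nonzero then a Klein pair exists in the Bott ring presented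
by `A`: distinct nonzero `x, x̄ ∈ H^1` with `x·x̄ = 0` and `(x + x̄)² = 0`. -/
theorem stmt11 {n : ℕ} (A : Matrix (Fin n) (Fin n) (ZMod 2)) (hA : IsUpperTri A)
    (hA0 : A ≠ 0) :
    ∃ x xbar : BottRing A, x ∈ deg1 A ∧ xbar ∈ deg1 A ∧ x ≠ 0 ∧ xbar ≠ 0 ∧
      x ≠ xbar ∧ x * xbar = 0 ∧ (x + xbar) ^ 2 = 0 := by
  obtain ⟨j, ⟨i, hij⟩, hprev⟩ := Matrix.exists_ne_zero_col_forall_lt_col_eq_zero hA0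
  refine ⟨bx A j, bx A j + alphaEl A j, bx_mem_deg1 A j,
    add_mem (bx_mem_deg1 A j) (alphaEl_mem_deg1 A j), (linearIndependent_bx A).ne_zero j,
    ?_, ?_, ?_, ?_⟩
  · rw [Ne, CharTwo.add_eq_zero]
    exact bx_ne_alphaEl A hA j
  · rw [Ne, left_eq_add, alphaEl_eq_zero_iff, not_forall]
    exact ⟨i, hij⟩
  · rw [mul_add, ← sq, bx_sq, CharTwo.add_self_eq_zero]
  · rw [CharTwo.add_cancel_left]
    exact alphaEl_sq_eq_zero A hA hprev
end

section
/- For A ∈ 𝔅(n), define involutions a_1,...,a_n of the torus T^n = (S^1)^n by a_i(z_1,...,z_n) = (z_1,...,z_{i-1}, −z_i, z_{i+1}(A^i_{i+1}), ..., z_n(A^i_n)), where z(0) = z and z(1) = z̄ (complex conjugate). Then the a_i pairwise commute, each a_i has order 2, and the group G(A) they generate is an elementary abelian 2-group of rank n acting freely on T^n. -/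
/-- The torus `T^n = (S^1)^n`, modelled additively as `(ℝ/ℤ)^n`; under the
exponential map `u ↦ exp(2π√-1 u)`, the map `z ↦ -z` corresponds to
`u ↦ u + 1/2` and complex conjugation `z ↦ z̄` corresponds to `u ↦ -u`. -/
abbrev Torus (n : ℕ) : Type := Fin n → AddCircle (1 : ℝ)

/-- The involution `a_i(z₁,…,zₙ) = (z₁,…,z_{i-1}, -z_i, z_{i+1}(A^i_{i+1}),…,z_n(A^i_n))`,
where `z(0) = z` and `z(1) = z̄`. -/
noncomputable def bottInv {n : ℕ} (A : Matrix (Fin n) (Fin n) (ZMod 2)) (i : Fin n) :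
    Function.End (Torus n) :=
  fun u j => if j = i then u i + ((1 / 2 : ℝ) : AddCircle (1 : ℝ))
    else if A i j = 1 then -u j else u j

section SignedShift

variable {ι G : Type*} [AddCommGroup G]

lemma ZMod.two_eq_zero_or_one (a : ZMod 2) : a = 0 ∨ a = 1 := by
  revert a; decide

def negIf (e : ZMod 2) (x : G) : G := if e = 1 then -x else x

@[simp] lemma negIf_zero_left (x : G) : negIf 0 x = x := rfl

@[simp] lemma negIf_one_left (x : G) : negIf 1 x = -x := rfl

@[simp] lemma negIf_zero_right (e : ZMod 2) : negIf e (0 : G) = 0 := by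
  simp [negIf]

lemma negIf_negIf (a b : ZMod 2) (x : G) : negIf a (negIf b x) = negIf (a + b) x := by
  rcases a.two_eq_zero_or_one with rfl | rfl <;> rcases b.two_eq_zero_or_one with rfl | rfl <;>
    simp [CharTwo.add_self_eq_zero]

lemma negIf_add (e : ZMod 2) (x y : G) : negIf e (x + y) = negIf e x + negIf e y := by
  rcases e.two_eq_zero_or_one with rfl | rfl <;> simp [add_comm]

lemma negIf_map (h : ZMod 2 →+ G) (e s : ZMod 2) : negIf e (h s) = h s := by
  rcases e.two_eq_zero_or_one with rfl | rfl
  · rfl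
  · rw [negIf_one_left, ← map_neg, ZMod.neg_eq_self_mod_two]

def signedShift (h : ZMod 2 →+ G) :
    Multiplicative ((ι → ZMod 2) × (ι → ZMod 2)) →* Function.End (ι → G) where
  toFun p u k := negIf (p.toAdd.1 k) (u k) + h (p.toAdd.2 k)
  map_one' := by funext u k; simp [Function.End.one_def]
  map_mul' p q := by
    funext u k
    change negIf ((p * q).toAdd.1 k) (u k) + h ((p * q).toAdd.2 k) =
      negIf (p.toAdd.1 k) (negIf (q.toAdd.1 k) (u k) + h (q.toAdd.2 k)) + h (p.toAdd.2 k)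
    simp only [toAdd_mul, Prod.fst_add, Prod.snd_add,
      Pi.add_apply, map_add, negIf_add, negIf_negIf, negIf_map]
    abel

lemma signedShift_apply (h : ZMod 2 →+ G) (p : Multiplicative ((ι → ZMod 2) × (ι → ZMod 2)))
    (u : ι → G) (k : ι) :
    signedShift h p u k = negIf (p.toAdd.1 k) (u k) + h (p.toAdd.2 k) := rfl

lemma signedShift_apply_zero (h : ZMod 2 →+ G)
    (p : Multiplicative ((ι → ZMod 2) × (ι → ZMod 2))) : signedShift h p 0 = h ∘ p.toAdd.2 := by
  funext k; simp [signedShift_apply]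

lemma snd_eq_of_signedShift_eq {h : ZMod 2 →+ G} (hh : Function.Injective h)
    {p q : Multiplicative ((ι → ZMod 2) × (ι → ZMod 2))}
    (hpq : signedShift h p = signedShift h q) : p.toAdd.2 = q.toAdd.2 := by
  have := congrArg (· 0) hpq
  simp only [signedShift_apply_zero] at this
  exact hh.comp_left this

lemma signedShift_apply_ne {h : ZMod 2 →+ G} (hh : Function.Injective h)
    {p : Multiplicative ((ι → ZMod 2) × (ι → ZMod 2))} {k : ι} (h1 : p.toAdd.1 k = 0)
    (h2 : p.toAdd.2 k ≠ 0) (u : ι → G) : signedShift h p u ≠ u := by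
  intro hu
  have := congrFun hu k
  rw [signedShift_apply, h1, negIf_zero_left, add_eq_left, map_eq_zero_iff h hh] at this
  exact h2 this

lemma signedShift_mul_self (h : ZMod 2 →+ G)
    (p : Multiplicative ((ι → ZMod 2) × (ι → ZMod 2))) :
    signedShift h p * signedShift h p = 1 := by
  rw [← map_mul, ← map_one (signedShift h)]
  congr 1
  ext k <;> exact CharTwo.add_self_eq_zero _

end SignedShift

section BottInvolutions

open Matrix

variable {n : ℕ} {A : Matrix (Fin n) (Fin n) (ZMod 2)}

lemma ZMod.toAddCircle_one_eq_half :
    ZMod.toAddCircle (1 : ZMod 2) = ((1 / 2 : ℝ) : AddCircle (1 : ℝ)) := by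
  simpa using ZMod.toAddCircle_natCast (N := 2) 1

lemma bottInv_eq_signedShift {i : Fin n} (hAi : A i i = 0) :
    bottInv A i = signedShift ZMod.toAddCircle (Multiplicative.ofAdd (A i, Pi.single i 1)) := by
  funext u k
  rw [signedShift_apply, toAdd_ofAdd]
  by_cases hki : k = i
  · subst hki
    simp only [bottInv, if_true, hAi, negIf_zero_left, Pi.single_eq_same,
      ZMod.toAddCircle_one_eq_half]
  · simp only [bottInv, hki, if_false, ne_eq, not_false_eq_true, Pi.single_eq_of_ne, map_zero,
      add_zero]
    rfl

lemma prod_ofFn_bottInv_pow (hA : ∀ i, A i i = 0) (c : Fin n → ZMod 2) :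
    (List.ofFn fun i => bottInv A i ^ (c i).val).prod =
      signedShift ZMod.toAddCircle (Multiplicative.ofAdd (c ᵥ* A, c)) := by
  have hpow : (fun i => bottInv A i ^ (c i).val) =
      signedShift ZMod.toAddCircle ∘ fun i => .ofAdd (A i, Pi.single i 1) ^ (c i).val := by
    funext i
    rw [Function.comp_apply, map_pow, bottInv_eq_signedShift (hA i)]
  rw [hpow, ← List.map_ofFn, ← map_list_prod, List.prod_ofFn]
  congr 1
  apply Multiplicative.toAdd.injective
  simp only [toAdd_prod, toAdd_pow, toAdd_ofAdd, ← Nat.cast_smul_eq_nsmul (ZMod 2),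
    ZMod.natCast_zmod_val]
  ext k
  · simp [Prod.fst_sum, Finset.sum_apply, vecMul, dotProduct]
  · simp [Prod.snd_sum, Finset.sum_apply, Pi.single_apply]

lemma IsUpperTri.exists_vecMul_apply_eq_zero (hA : IsUpperTri A) {c : Fin n → ZMod 2}
    (hc : c ≠ 0) : ∃ k, (c ᵥ* A) k = 0 ∧ c k ≠ 0 := by
  obtain ⟨k, hk, hmin⟩ := wellFounded_lt.has_min {i | c i ≠ 0} (Function.ne_iff.mp hc)
  refine ⟨k, ?_, hk⟩
  rw [vecMul, dotProduct]
  refine Finset.sum_eq_zero fun i _ => ?_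
  rcases lt_or_ge i k with hik | hki
  · rw [not_not.mp fun h => hmin i h hik, zero_mul]
  · rw [hA i k hki, mul_zero]

end BottInvolutions

/-- The `a_i` pairwise commute, each `a_i` has order 2, and the group `G(A)` they
generate is elementary abelian of rank `n` (the map `(Z/2)^n → End(T^n)`,
`c ↦ ∏ a_i^{c_i}`, is injective) and acts freely on `T^n`. -/
theorem stmt15 {n : ℕ} (A : Matrix (Fin n) (Fin n) (ZMod 2)) (hA : IsUpperTri A) :
    (∀ i j : Fin n, bottInv A i * bottInv A j = bottInv A j * bottInv A i) ∧
    (∀ i : Fin n, bottInv A i * bottInv A i = 1) ∧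
    (∀ i : Fin n, bottInv A i ≠ 1) ∧
    Function.Injective
      (fun c : Fin n → ZMod 2 => (List.ofFn fun i : Fin n => bottInv A i ^ (c i).val).prod) ∧
    (∀ c : Fin n → ZMod 2, c ≠ 0 →
      ∀ u : Torus n, ((List.ofFn fun i : Fin n => bottInv A i ^ (c i).val).prod) u ≠ u) := by
  have hdiag : ∀ i, A i i = 0 := fun i => hA i i le_rfl
  have hinj := ZMod.toAddCircle_injective 2
  refine ⟨fun i j => ?_, fun i => ?_, fun i hi => ?_, fun c c' hcc' => ?_, fun c hc u => ?_⟩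
  · rw [bottInv_eq_signedShift (hdiag i), bottInv_eq_signedShift (hdiag j)]
    exact ((Commute.all _ _).map _).eq
  · rw [bottInv_eq_signedShift (hdiag i)]
    exact signedShift_mul_self _ _
  · rw [bottInv_eq_signedShift (hdiag i), ← map_one (signedShift _)] at hi
    simpa using congrFun (snd_eq_of_signedShift_eq hinj hi) i
  · beta_reduce at hcc'
    simp only [prod_ofFn_bottInv_pow hdiag] at hcc'
    simpa using snd_eq_of_signedShift_eq hinj hcc'
  · obtain ⟨k, hk, hck⟩ := hA.exists_vecMul_apply_eq_zero hc
    rw [prod_ofFn_bottInv_pow hdiag]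
    exact signedShift_apply_ne (p := .ofAdd (Matrix.vecMul c A, c)) hinj hk hck u
end

section
/- Let A ∈ 𝔅(n) with A^i_{i+1} = 1 for all i = 1,...,n−1 (i.e., A ∈ Δ(n)). Then A is Bott equivalent, using only operations of type Φ^k, to a unique matrix Ā ∈ Δ(n) with Ā^i_{i+2} = 0 for all i = 1,...,n−2. Consequently there are exactly 2^{(n−2)(n−3)/2} Bott equivalence classes in Δ(n) for n ≥ 2. -/
/-- The second operation (Op2): the `j`-th column of `Φ^k(A)` is `A_j + A^k_j A_k`. -/
def Phi2 {n : ℕ} (A : Matrix (Fin n) (Fin n) (ZMod 2)) (k : Fin n) :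
    Matrix (Fin n) (Fin n) (ZMod 2) :=
  fun i j => A i j + A k j * A i k

/-- Membership in `Δ(n) ⊆ 𝔅(n)`: strictly upper triangular with
`A^i_{i+1} = 1` for all `i`. -/
def InDelta {n : ℕ} (A : Matrix (Fin n) (Fin n) (ZMod 2)) : Prop :=
  IsUpperTri A ∧ ∀ i j : Fin n, (j : ℕ) = (i : ℕ) + 1 → A i j = 1

/-- The equivalence relation on matrices generated by the operations `Φ^k`. -/
def Phi2Equiv {n : ℕ} : Matrix (Fin n) (Fin n) (ZMod 2) →
    Matrix (Fin n) (Fin n) (ZMod 2) → Prop :=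
  Relation.EqvGen (fun A B => ∃ k : Fin n, B = Phi2 A k)

/-!
Write `Φ^k(A) = A + A E_k A`, with `E_k` the diagonal idempotent at `k`. For strictly upper
triangular `A` and a diagonal 0/1 matrix `D`, put `Φ_D(A) = A (1 + D A)⁻¹`; then
`Φ_{D'} ∘ Φ_D = Φ_{D + D'}` and `Φ^k = Φ_{E_k}`, so the class of `A ∈ Δ(n)` is `{Φ_D(A)}`.
On the second superdiagonal, `Φ_D(A) (1 + D A) = A` reads
`Φ_D(A)^i_{i+2} + D_{i+1} = A^i_{i+2}`: two normal forms in one class differ by a `D` supported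
on the first and last index, where it acts trivially. Conversely `Φ^{i+1}` flips only the entry
`(i, i+2)` of the second superdiagonal, which produces a normal form. Normal forms are free
exactly in the entries `(i, j)` with `j ≥ i + 3`.
-/

open Matrix

variable {n : ℕ} {A B : Matrix (Fin n) (Fin n) (ZMod 2)}

def IsNormalForm (A : Matrix (Fin n) (Fin n) (ZMod 2)) : Prop :=
  InDelta A ∧ ∀ i j : Fin n, (j : ℕ) = i + 2 → A i j = 0

lemma equivalence_phi2Equiv : Equivalence (Phi2Equiv (n := n)) :=
  Relation.EqvGen.is_equivalence _

lemma IsUpperTri.isUnit_det_one_add_diagonal_mul (hA : IsUpperTri A) (d : Fin n → ZMod 2) :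
    IsUnit (1 + diagonal d * A).det := by
  have htri : (1 + diagonal d * A).IsUpperTriangular := fun i j (hji : j < i) => by
    simp [diagonal_mul, one_apply_ne hji.ne', hA i j hji.le]
  simp [det_of_isUpperTriangular htri, diagonal_mul, hA _ _ le_rfl]

noncomputable def phiDiag (d : Fin n → ZMod 2) (A : Matrix (Fin n) (Fin n) (ZMod 2)) :
    Matrix (Fin n) (Fin n) (ZMod 2) :=
  A * (1 + diagonal d * A)⁻¹

lemma phiDiag_zero (A : Matrix (Fin n) (Fin n) (ZMod 2)) : phiDiag 0 A = A := by
  simp [phiDiag]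

lemma phiDiag_mul_one_add (hA : IsUpperTri A) (d : Fin n → ZMod 2) :
    phiDiag d A * (1 + diagonal d * A) = A :=
  nonsing_inv_mul_cancel_right _ _ (hA.isUnit_det_one_add_diagonal_mul d)

lemma phiDiag_phiDiag (hA : IsUpperTri A) (d d' : Fin n → ZMod 2) :
    phiDiag d' (phiDiag d A) = phiDiag (d + d') A := by
  set X := 1 + diagonal d * A
  have hX : IsUnit X.det := hA.isUnit_det_one_add_diagonal_mul d
  have hXY : 1 + diagonal d' * (A * X⁻¹) = (1 + diagonal (d + d') * A) * X⁻¹ := by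
    have hY : 1 + diagonal (d + d') * A = X + diagonal d' * A := by
      rw [show diagonal (d + d') = diagonal d + diagonal d' from (diagonal_add d d').symm,
        Matrix.add_mul, add_assoc]
    rw [hY, Matrix.add_mul, mul_nonsing_inv _ hX, Matrix.mul_assoc]
  rw [phiDiag, phiDiag, phiDiag, hXY, Matrix.mul_inv_rev, nonsing_inv_nonsing_inv _ hX,
    ← Matrix.mul_assoc, nonsing_inv_mul_cancel_right _ _ hX]

lemma phiDiag_phiDiag_self (hA : IsUpperTri A) (d : Fin n → ZMod 2) :
    phiDiag d (phiDiag d A) = A := by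
  rw [phiDiag_phiDiag hA, show d + d = 0 from funext fun i => CharTwo.add_self_eq_zero (d i),
    phiDiag_zero]

lemma phi2_eq_phiDiag {k : Fin n} (hk : A k k = 0) : Phi2 A k = phiDiag (Pi.single k 1) A := by
  set E := diagonal (Pi.single k (1 : ZMod 2)) * A
  have hE : ∀ i j, E i j = if i = k then A k j else 0 := fun i j => by
    by_cases h : i = k <;> simp [E, diagonal_mul, h]
  have hEE : E * E = 0 := by
    ext i j
    simp [mul_apply, hE, hk]
  have h2E : E + E = 0 := by
    ext i j
    exact CharTwo.add_self_eq_zero (E i j)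
  have hsq : (1 + E) * (1 + E) = 1 := by
    rw [show (1 + E) * (1 + E) = 1 + (E + E) + E * E by noncomm_ring, hEE, h2E, add_zero,
      add_zero]
  rw [phiDiag, inv_eq_left_inv hsq, Matrix.mul_add, Matrix.mul_one]
  ext i j
  simp [Phi2, mul_apply, hE, mul_comm]

lemma mul_diagonal_mul_apply (B A : Matrix (Fin n) (Fin n) (ZMod 2)) (d : Fin n → ZMod 2)
    (i j : Fin n) : (B * (diagonal d * A)) i j = ∑ l, B i l * d l * A l j := by
  rw [mul_apply]
  simp [diagonal_mul, mul_assoc]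

lemma IsUpperTri.apply_mul_apply_eq_zero (hA : IsUpperTri A) {i j : Fin n}
    (hij : (j : ℕ) ≤ i + 1) (k : Fin n) : A i k * A k j = 0 := by
  rcases le_or_gt k i with hki | hik
  · rw [hA i k hki, zero_mul]
  · rw [hA k j (Fin.le_def.2 (by omega)), mul_zero]

lemma IsUpperTri.phi2_apply_of_le_succ (hA : IsUpperTri A) {i j : Fin n}
    (hij : (j : ℕ) ≤ i + 1) (k : Fin n) : Phi2 A k i j = A i j := by
  rw [Phi2, mul_comm, hA.apply_mul_apply_eq_zero hij, add_zero]

lemma InDelta.phi2 (hA : InDelta A) (k : Fin n) : InDelta (Phi2 A k) := by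
  refine ⟨fun i j hji => ?_, fun i j hij => ?_⟩
  · rw [hA.1.phi2_apply_of_le_succ (by have := Fin.le_def.1 hji; omega), hA.1 i j hji]
  · rw [hA.1.phi2_apply_of_le_succ hij.le, hA.2 i j hij]

lemma InDelta.phi2_apply_of_eq_add_two (hA : InDelta A) {i j : Fin n} (hij : (j : ℕ) = i + 2)
    (k : Fin n) : Phi2 A k i j = A i j + if (k : ℕ) = i + 1 then 1 else 0 := by
  rw [Phi2]
  split_ifs with hk
  · rw [hA.2 k j (by omega), hA.2 i k hk, one_mul]
  · rcases le_or_gt k i with hki | hik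
    · rw [hA.1 i k hki, mul_zero]
    · rw [hA.1 k j (Fin.le_def.2 (by omega)), zero_mul]

lemma phi2_phi2_of_apply_self_eq_zero {k : Fin n} (hk : A k k = 0) : Phi2 (Phi2 A k) k = A := by
  have key : ∀ a b c : ZMod 2, a + b * c + (b + b * 0) * (c + 0 * c) = a := by decide
  ext i j
  simp only [Phi2, hk]
  exact key _ _ _

lemma InDelta.of_phi2 (hn : 2 ≤ n) {k : Fin n} (h : InDelta (Phi2 A k)) : InDelta A := by
  have hkk : A k k = 0 := by
    by_contra hk
    have hk1 : A k k = 1 := Fin.eq_one_of_ne_zero _ hk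
    have hrow : ∀ j, Phi2 A k k j = 0 := fun j => by
      rw [Phi2, hk1, mul_one, CharTwo.add_self_eq_zero]
    have hcol : ∀ i, Phi2 A k i k = 0 := fun i => by
      rw [Phi2, hk1, one_mul, CharTwo.add_self_eq_zero]
    rcases lt_or_ge ((k : ℕ) + 1) n with hlt | hge
    · exact zero_ne_one ((hrow ⟨k + 1, hlt⟩).symm.trans (h.2 k _ rfl))
    · exact zero_ne_one ((hcol _).symm.trans (h.2 ⟨k - 1, by omega⟩ k (by simp; omega)))
  rw [← phi2_phi2_of_apply_self_eq_zero hkk]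
  exact h.phi2 k

lemma InDelta.mul_diagonal_mul_apply_of_eq_add_two (hA : InDelta A) (hB : InDelta B)
    (d : Fin n → ZMod 2) {i j k : Fin n} (hij : (j : ℕ) = i + 2) (hk : (k : ℕ) = i + 1) :
    (B * (diagonal d * A)) i j = d k := by
  rw [mul_diagonal_mul_apply, Finset.sum_eq_single k]
  · rw [hB.2 i k hk, hA.2 k j (by omega), one_mul, mul_one]
  · intro l _ hlk
    rcases le_or_gt l i with hli | hil
    · rw [hB.1 i l hli, zero_mul, zero_mul]
    · have : (l : ℕ) ≠ k := fun e => hlk (Fin.ext e)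
      rw [hA.1 l j (Fin.le_def.2 (by have := Fin.lt_def.1 hil; omega)), mul_zero]
  · simp

-- `Phi2Equiv` may leave `Δ(n)`; for `n ≥ 2` a step `Φ^k` ending in `Δ(n)` also starts there.
def PhiDiagRel (A B : Matrix (Fin n) (Fin n) (ZMod 2)) : Prop :=
  (InDelta A ↔ InDelta B) ∧ (InDelta A → ∃ d, B = phiDiag d A)

lemma equivalence_phiDiagRel : Equivalence (PhiDiagRel (n := n)) where
  refl A := ⟨Iff.rfl, fun _ => ⟨0, (phiDiag_zero A).symm⟩⟩
  symm := by
    rintro A B ⟨hAB, hphi⟩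
    refine ⟨hAB.symm, fun hB => ?_⟩
    obtain ⟨d, rfl⟩ := hphi (hAB.2 hB)
    exact ⟨d, (phiDiag_phiDiag_self (hAB.2 hB).1 d).symm⟩
  trans := by
    rintro A B C ⟨hAB, hAB'⟩ ⟨hBC, hBC'⟩
    refine ⟨hAB.trans hBC, fun hA => ?_⟩
    obtain ⟨d, rfl⟩ := hAB' hA
    obtain ⟨d', rfl⟩ := hBC' (hAB.1 hA)
    exact ⟨d + d', phiDiag_phiDiag hA.1 d d'⟩

lemma Phi2Equiv.phiDiagRel (hn : 2 ≤ n) (h : Phi2Equiv A B) : PhiDiagRel A B := by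
  refine equivalence_phiDiagRel.eqvGen_iff.1 (Relation.EqvGen.mono ?_ _ _ h)
  rintro A _ ⟨k, rfl⟩
  exact ⟨⟨fun hA => hA.phi2 k, InDelta.of_phi2 hn⟩,
    fun hA => ⟨_, phi2_eq_phiDiag (hA.1 k k le_rfl)⟩⟩

lemma IsNormalForm.eq_of_eq_phiDiag (hA : IsNormalForm A) (hB : IsNormalForm B)
    {d : Fin n → ZMod 2} (h : B = phiDiag d A) : B = A := by
  have hBA : B + B * (diagonal d * A) = A := by
    rw [← Matrix.mul_one B, Matrix.mul_assoc, ← Matrix.mul_add, Matrix.one_mul, h,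
      phiDiag_mul_one_add hA.1.1]
  have hd : ∀ l : Fin n, 0 < (l : ℕ) → (l : ℕ) + 1 < n → d l = 0 := by
    intro l hl0 hl1
    obtain ⟨i, hi⟩ : ∃ i : Fin n, (i : ℕ) + 1 = l :=
      ⟨⟨l - 1, by omega⟩, by simp only; omega⟩
    obtain ⟨j, hj⟩ : ∃ j : Fin n, (j : ℕ) = l + 1 := ⟨⟨l + 1, hl1⟩, rfl⟩
    have hij : (j : ℕ) = i + 2 := by omega
    have hentry := congrFun (congrFun hBA i) j
    rwa [Matrix.add_apply, hA.2 i j hij, hB.2 i j hij, zero_add,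
      hA.1.mul_diagonal_mul_apply_of_eq_add_two hB.1 d hij hi.symm] at hentry
  have hzero : B * (diagonal d * A) = 0 := by
    ext i j
    rw [mul_diagonal_mul_apply, Matrix.zero_apply]
    refine Finset.sum_eq_zero fun l _ => ?_
    by_cases hl0 : (l : ℕ) = 0
    · rw [hB.1.1 i l (Fin.le_def.2 (by omega)), zero_mul, zero_mul]
    by_cases hl1 : (l : ℕ) + 1 = n
    · rw [hA.1.1 l j (Fin.le_def.2 (by omega)), mul_zero]
    rw [hd l (by omega) (by omega), mul_zero, zero_mul]
  rwa [hzero, add_zero] at hBA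

lemma IsNormalForm.eq_of_phi2Equiv (hn : 2 ≤ n) (hA : IsNormalForm A) (hB : IsNormalForm B)
    (h : Phi2Equiv A B) : B = A := by
  obtain ⟨d, hd⟩ := (h.phiDiagRel hn).2 hA.1
  exact hA.eq_of_eq_phiDiag hB hd

lemma InDelta.exists_isNormalForm_phi2Equiv (hA : InDelta A) :
    ∃ B, IsNormalForm B ∧ Phi2Equiv A B := by
  suffices ∀ t : ℕ, ∃ B, InDelta B ∧
      (∀ i j : Fin n, (j : ℕ) = i + 2 → (i : ℕ) < t → B i j = 0) ∧ Phi2Equiv A B by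
    obtain ⟨B, hB, hB2, hAB⟩ := this n
    exact ⟨B, ⟨hB, fun i j hij => hB2 i j hij i.isLt⟩, hAB⟩
  intro t
  induction t with
  | zero => exact ⟨A, hA, fun _ _ _ ht => absurd ht (Nat.not_lt_zero _), .refl A⟩
  | succ t ih =>
    obtain ⟨B, hB, hB2, hAB⟩ := ih
    by_cases hflip : ∃ i j : Fin n, (j : ℕ) = i + 2 ∧ (i : ℕ) = t ∧ B i j = 1
    · obtain ⟨i₀, j₀, hj₀, hi₀, h1⟩ := hflip
      let k : Fin n := ⟨t + 1, by omega⟩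
      refine ⟨Phi2 B k, hB.phi2 k, fun i j hij hit => ?_,
        .trans _ _ _ hAB (.rel _ _ ⟨k, rfl⟩)⟩
      rw [hB.phi2_apply_of_eq_add_two hij]
      rcases Nat.lt_succ_iff_lt_or_eq.1 hit with hlt | rfl
      · rw [hB2 i j hij hlt, if_neg (by simp [k]; omega), add_zero]
      · obtain rfl : i = i₀ := Fin.ext hi₀.symm
        obtain rfl : j = j₀ := Fin.ext (by omega)
        rw [h1, if_pos rfl, CharTwo.add_self_eq_zero]
    · refine ⟨B, hB, fun i j hij hit => ?_, hAB⟩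
      rcases Nat.lt_succ_iff_lt_or_eq.1 hit with hlt | rfl
      · exact hB2 i j hij hlt
      · by_contra hne
        exact hflip ⟨i, j, hij, rfl, Fin.eq_one_of_ne_zero _ hne⟩

lemma card_quot_phi2Equiv (hn : 2 ≤ n) :
    Nat.card (Quot (fun A B : {M : Matrix (Fin n) (Fin n) (ZMod 2) // InDelta M} =>
      Phi2Equiv A.1 B.1)) = Nat.card {M : Matrix (Fin n) (Fin n) (ZMod 2) // IsNormalForm M} := by
  refine (Nat.card_eq_of_bijective (fun M => Quot.mk _ ⟨M.1, M.2.1⟩) ⟨?_, ?_⟩).symm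
  · intro M N hMN
    have h := (equivalence_phi2Equiv.comap Subtype.val).eqvGen_iff.1 (Quot.eqvGen_exact hMN)
    exact Subtype.ext (M.2.eq_of_phi2Equiv hn N.2 h).symm
  · refine Quot.ind fun A => ?_
    obtain ⟨B, hB, hAB⟩ := A.2.exists_isNormalForm_phi2Equiv
    exact ⟨⟨B, hB⟩, Quot.sound (equivalence_phi2Equiv.symm hAB)⟩

lemma isNormalForm_iff :
    IsNormalForm A ↔
      ∀ i j : Fin n, ¬ (i : ℕ) + 3 ≤ j → A i j = if (j : ℕ) = i + 1 then 1 else 0 := by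
  refine ⟨fun ⟨⟨hup, hsup⟩, h2⟩ i j hij => ?_,
    fun h => ⟨⟨fun i j hji => ?_, fun i j hij => ?_⟩, fun i j hij => ?_⟩⟩
  · split_ifs with h1
    · exact hsup i j h1
    rcases (by omega : (j : ℕ) ≤ i ∨ (j : ℕ) = i + 2) with h3 | h3
    · exact hup i j (Fin.le_def.2 h3)
    · exact h2 i j h3
  · have := Fin.le_def.1 hji
    rw [h i j (by omega), if_neg (by omega)]
  · rw [h i j (by omega), if_pos hij]
  · rw [h i j (by omega), if_neg (by omega)]

def Matrix.subtypeEqOffEquiv {m k R : Type*} (P : m → k → Prop) [∀ i j, Decidable (P i j)]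
    (T : Matrix m k R) :
    {M : Matrix m k R // ∀ i j, ¬ P i j → M i j = T i j} ≃
      ({p : m × k // P p.1 p.2} → R) where
  toFun M p := M.1 p.1.1 p.1.2
  invFun f :=
    ⟨fun i j => if h : P i j then f ⟨(i, j), h⟩ else T i j, fun _ _ h => dif_neg h⟩
  left_inv M := by
    ext i j
    by_cases h : P i j <;> simp [h, M.2 i j]
  right_inv f := by
    ext p
    simp [p.2]

def pairsAddThreeLeEquiv (n : ℕ) :
    {p : Fin n × Fin n // (p.1 : ℕ) + 3 ≤ p.2} ≃
      {p : Fin (n - 2) × Fin (n - 2) // p.1 < p.2} where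
  toFun p := ⟨(⟨p.1.1, by omega⟩, ⟨p.1.2 - 2, by omega⟩), by
    rw [Fin.lt_def]; dsimp only; omega⟩
  invFun q := ⟨(⟨q.1.1, by omega⟩, ⟨q.1.2 + 2, by omega⟩), by
    have := Fin.lt_def.1 q.2; dsimp only; omega⟩
  left_inv p := by
    ext <;> simp
    omega
  right_inv q := by ext <;> simp

lemma card_pairs_add_three_le (n : ℕ) :
    Fintype.card {p : Fin n × Fin n // (p.1 : ℕ) + 3 ≤ p.2} = (n - 2).choose 2 := by
  rw [Fintype.card_congr (pairsAddThreeLeEquiv n), Fintype.card_subtype,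
    ← Finset.univ_product_univ, Finset.card_product_filter_lt, Finset.card_univ, Fintype.card_fin]

lemma card_isNormalForm (n : ℕ) :
    Nat.card {M : Matrix (Fin n) (Fin n) (ZMod 2) // IsNormalForm M} =
      2 ^ (n - 2).choose 2 := by
  rw [Nat.card_congr ((Equiv.subtypeEquivRight fun _ => isNormalForm_iff).trans
      (Matrix.subtypeEqOffEquiv _ _)), Nat.card_eq_fintype_card, Fintype.card_fun, ZMod.card,
    card_pairs_add_three_le]

/-- Every `A ∈ Δ(n)` is equivalent, using only the operations `Φ^k`, to a unique
matrix `Ā ∈ Δ(n)` with `Ā^i_{i+2} = 0` for all `i`; consequently there are exactly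
`2^((n-2)(n-3)/2)` Bott equivalence classes in `Δ(n)` for `n ≥ 2`. -/
theorem stmt16 {n : ℕ} (hn : 2 ≤ n) :
    (∀ A : Matrix (Fin n) (Fin n) (ZMod 2), InDelta A →
      ∃! Abar : Matrix (Fin n) (Fin n) (ZMod 2),
        InDelta Abar ∧ (∀ i j : Fin n, (j : ℕ) = (i : ℕ) + 2 → Abar i j = 0) ∧
        Phi2Equiv A Abar) ∧
    Nat.card (Quot (fun A B : {M : Matrix (Fin n) (Fin n) (ZMod 2) // InDelta M} =>
        Phi2Equiv A.1 B.1)) = 2 ^ ((n - 2) * (n - 3) / 2) := by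
  refine ⟨fun A hA => ?_, ?_⟩
  · obtain ⟨B, hB, hAB⟩ := hA.exists_isNormalForm_phi2Equiv
    refine ⟨B, ⟨hB.1, hB.2, hAB⟩, fun C ⟨hC, hC2, hAC⟩ => ?_⟩
    exact hB.eq_of_phi2Equiv hn ⟨hC, hC2⟩ (equivalence_phi2Equiv.trans
      (equivalence_phi2Equiv.symm hAB) hAC)
  · rw [card_quot_phi2Equiv hn, card_isNormalForm, Nat.choose_two_right, Nat.sub_sub]
end
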